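/- arXiv:2501.04125 — 5 statements merged into one kernel-verified Lean document; each statement's English description precedes it below -/
import Mathlib

section
/- Suppose (G,•) is a magma whose operation • is associative and commutative. Let X, Y be sets, let α, α' : (X → G) → (X → G), and let β, β' : (Y → G) → (Y → G). Then (α • α') * (β • β') = (α * β) • (α' * β'), where on each side • denotes the pointwise operation on transition functions and * denotes coupling. -/
open scoped Classical

/-- The restriction of `g : Z → G` to a subset `W ⊆ Z`. -/
def restrict {U G : Type*} {Z : Set U} (W : Set U) (hW : W ⊆ Z) (g : Z → G) : W → G :=
  fun w => g ⟨w, hW w.2⟩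

/-- The coupling `α * β` of two transition functions, defined on a set `Z`
satisfying `X ⊆ Z`, `Y ⊆ Z`, `Z ⊆ X ∪ Y`. -/
noncomputable def couple {U G : Type*} (op : G → G → G) {X Y Z : Set U}
    (hX : X ⊆ Z) (hY : Y ⊆ Z) (hZ : ∀ z ∈ Z, z ∈ X ∨ z ∈ Y)
    (α : (X → G) → (X → G)) (β : (Y → G) → (Y → G)) : (Z → G) → (Z → G) :=
  fun g z =>
    if hx : (z : U) ∈ X then
      if hy : (z : U) ∈ Y then
        op (α (restrict X hX g) ⟨z, hx⟩) (β (restrict Y hY g) ⟨z, hy⟩)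
      else α (restrict X hX g) ⟨z, hx⟩
    else β (restrict Y hY g) ⟨z, (hZ z z.2).resolve_left hx⟩


/-- coupling distributes over the pointwise operation when the
magma is associative and commutative. -/
theorem couple_pointwise {U G : Type*} (op : G → G → G)
    (hassoc : ∀ a b c : G, op (op a b) c = op a (op b c))
    (hcomm : ∀ a b : G, op a b = op b a)
    (X Y : Set U) (α α' : (X → G) → (X → G)) (β β' : (Y → G) → (Y → G)) :
    couple op (Z := X ∪ Y) Set.subset_union_left Set.subset_union_right
        (fun _ hz => hz)
        (fun g x => op (α g x) (α' g x)) (fun g y => op (β g y) (β' g y))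
    = fun g z =>
        op (couple op (Z := X ∪ Y) Set.subset_union_left Set.subset_union_right
              (fun _ hz => hz) α β g z)
           (couple op (Z := X ∪ Y) Set.subset_union_left Set.subset_union_right
              (fun _ hz => hz) α' β' g z) := by
  funext g z
  simp only [couple]
  by_cases hx : (z : U) ∈ X <;> by_cases hy : (z : U) ∈ Y <;>
    simp only [hx, hy, dif_pos, dif_neg, not_false_iff]
  · rw [hassoc, ← hassoc (α' _ _), hcomm (α' _ _), hassoc, ← hassoc]
end

section
/- Let (G,+) be an abelian group, let X and Y be sets, and let α : (X → G) → (X → G) and β : (Y → G) → (Y → G) be transition functions. Suppose H₀ ⊆ (X → G) is closed under α and H₁ ⊆ (Y → G) is closed under β. Suppose moreover that for every h ∈ H₀ and h' ∈ H₁ we have h + (β(h'))↾X ∈ H₀, and for every h ∈ H₀ and h' ∈ H₁ we have h' + (α(h))↾Y ∈ H₁, where (β(h'))↾X denotes the function on X equal to β(h') on X ∩ Y and equal to 0 on X \ Y, and similarly (α(h))↾Y is the function on Y equal to α(h) on X ∩ Y and 0 on Y \ X. Then the set H₀ * H₁ := { h : X ∪ Y → G | h↾X ∈ H₀ and h↾Y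 ∈ H₁ } is closed under the coupling α * β. -/
open scoped Classical

/-- closure of `H₀ * H₁` under the coupling, given closure of
`H₀`, `H₁` under `α`, `β` and under adding the (zero-extended) restrictions
of `β(h')` and `α(h)`. -/
theorem coupling_closure_cond1 {U G : Type*} [AddCommGroup G] (X Y : Set U)
    (α : (X → G) → (X → G)) (β : (Y → G) → (Y → G))
    (H₀ : Set (X → G)) (H₁ : Set (Y → G))
    (hH₀ : ∀ h ∈ H₀, α h ∈ H₀) (hH₁ : ∀ h ∈ H₁, β h ∈ H₁)
    (hcl₀ : ∀ h ∈ H₀, ∀ h' ∈ H₁,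
      (fun x : X => h x + if hy : (x : U) ∈ Y then β h' ⟨x, hy⟩ else 0) ∈ H₀)
    (hcl₁ : ∀ h ∈ H₀, ∀ h' ∈ H₁,
      (fun y : Y => h' y + if hx : (y : U) ∈ X then α h ⟨y, hx⟩ else 0) ∈ H₁) :
    ∀ g : (↥(X ∪ Y) → G),
      g ∈ {h : ↥(X ∪ Y) → G |
            restrict X Set.subset_union_left h ∈ H₀ ∧
            restrict Y Set.subset_union_right h ∈ H₁} →
      couple (· + ·) (Z := X ∪ Y) Set.subset_union_left Set.subset_union_right
          (fun _ hz => hz) α β g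
        ∈ {h : ↥(X ∪ Y) → G |
            restrict X Set.subset_union_left h ∈ H₀ ∧
            restrict Y Set.subset_union_right h ∈ H₁} := by
  rintro g ⟨h0, h1⟩
  constructor
  · have := hcl₀ _ (hH₀ _ h0) _ h1
    convert this using 1
    funext x
    simp only [restrict, couple, x.2, dif_pos]
    split <;> simp
  · have := hcl₁ _ h0 _ (hH₁ _ h1)
    convert this using 1
    funext y
    simp only [restrict, couple, y.2]
    by_cases hx : (y : U) ∈ X <;> simp [hx]
    exact add_comm _ _
end

section
/- Let (G,+) be an abelian group, let X and Y be sets, and let α : (X → G) → (X → G) and β : (Y → G) → (Y → G) be transition functions. Suppose H₀ ⊆ (X → G) is closed under α and H₁ ⊆ (Y → G) is closed under β. Suppose moreover that H₀ and H₁ are closed under the translation actions of G^{X∩Y}: for every g : X ∩ Y → G and every h ∈ H₀, the function h + ĝ is in H₀, where ĝ : X → G equals g on X ∩ Y and 0 on X \ Y; and similarly for every g : X ∩ Y → G and h' ∈ H₁, h' + ĝ' ∈ H₁, where ĝ' : Y → G equals g on X ∩ Y and 0 on Y \ X. Then the set H₀ * H₁ := { h : X ∪ Y → G | h↾X ∈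 H₀ and h↾Y ∈ H₁ } is closed under the coupling α * β. -/
open scoped Classical

/-- closure of `H₀ * H₁` under the coupling, given closure of
`H₀`, `H₁` under `α`, `β` and under the translation actions of `G^(X ∩ Y)`. -/
theorem coupling_closure_cond2 {U G : Type*} [AddCommGroup G] (X Y : Set U)
    (α : (X → G) → (X → G)) (β : (Y → G) → (Y → G))
    (H₀ : Set (X → G)) (H₁ : Set (Y → G))
    (hH₀ : ∀ h ∈ H₀, α h ∈ H₀) (hH₁ : ∀ h ∈ H₁, β h ∈ H₁)
    (htr₀ : ∀ t : ↥(X ∩ Y) → G, ∀ h ∈ H₀,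
      (fun x : X => h x + if hy : (x : U) ∈ Y then t ⟨x, ⟨x.2, hy⟩⟩ else 0) ∈ H₀)
    (htr₁ : ∀ t : ↥(X ∩ Y) → G, ∀ h' ∈ H₁,
      (fun y : Y => h' y + if hx : (y : U) ∈ X then t ⟨y, ⟨hx, y.2⟩⟩ else 0) ∈ H₁) :
    ∀ g : (↥(X ∪ Y) → G),
      g ∈ {h : ↥(X ∪ Y) → G |
            restrict X Set.subset_union_left h ∈ H₀ ∧
            restrict Y Set.subset_union_right h ∈ H₁} →
      couple (· + ·) (Z := X ∪ Y) Set.subset_union_left Set.subset_union_right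
          (fun _ hz => hz) α β g
        ∈ {h : ↥(X ∪ Y) → G |
            restrict X Set.subset_union_left h ∈ H₀ ∧
            restrict Y Set.subset_union_right h ∈ H₁} := by
  intro g hg
  obtain ⟨hg0, hg1⟩ := hg
  constructor
  · have := htr₀ (fun z => β (restrict Y Set.subset_union_right g) ⟨z, z.2.2⟩)
      (α (restrict X Set.subset_union_left g)) (hH₀ _ hg0)
    convert this using 1
    funext x
    simp only [restrict, couple, x.2, dif_pos]
    split <;> simp
  · have := htr₁ (fun z => α (restrict X Set.subset_union_left g) ⟨z, z.2.1⟩)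
      (β (restrict Y Set.subset_union_right g)) (hH₁ _ hg1)
    convert this using 1
    funext y
    simp only [restrict, couple, y.2]
    split
    · exact add_comm _ _
    · simp
end

section
/- Let G = ℤ/2ℤ with its additive group structure, let Z = {0,1,2,3}, X = {0,1,2}, Y = {1,2,3}, and define γ : (Z → G) → (Z → G) by γ(b)(0) = b(0), γ(b)(1) = max{b(0), b(2)}, γ(b)(2) = b(3), γ(b)(3) = b(3), where max is taken with respect to the order 0 < 1 on ℤ/2ℤ (i.e., max{a,b} = 0 iff a = b = 0). Then γ ∘ γ is NOT reducible to the cover {X, Y}: there exist no α : (X → G) → (X → G) and β : (Y → G) → (Y → G) such that γ ∘ γ = α * β. -/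
open scoped Classical

/-- Reducibility of a transition function on `X ∪ Y` to the cover `{X, Y}`. -/
def IsReducible {U G : Type*} (op : G → G → G) (X Y : Set U)
    (γ : (↥(X ∪ Y) → G) → (↥(X ∪ Y) → G)) : Prop :=
  ∃ (α : (X → G) → (X → G)) (β : (Y → G) → (Y → G)),
    γ = couple op (Z := X ∪ Y) Set.subset_union_left Set.subset_union_right
      (fun _ hz => hz) α β

/-- `X = {0,1,2}`. -/
def Xs : Set ℕ := {0, 1, 2}

/-- `Y = {1,2,3}`, so that `Z = X ∪ Y = {0,1,2,3}`. -/
def Ys : Set ℕ := {1, 2, 3}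

/-- `max` on `ZMod 2` w.r.t. the order `0 < 1`: `zmax a b = 0` iff `a = b = 0`. -/
def zmax (a b : ZMod 2) : ZMod 2 := if a = 0 ∧ b = 0 then 0 else 1

/-- The transition function `γ` with
`γ(b) = (b₀, max{b₀, b₂}, b₃, b₃)` on `Z = {0,1,2,3}`. -/
def gam (b : ↥(Xs ∪ Ys) → ZMod 2) : ↥(Xs ∪ Ys) → ZMod 2 :=
  fun z =>
    if (z : ℕ) = 0 then b ⟨0, by simp [Xs, Ys]⟩
    else if (z : ℕ) = 1 then zmax (b ⟨0, by simp [Xs, Ys]⟩) (b ⟨2, by simp [Xs, Ys]⟩)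
    else b ⟨3, by simp [Xs, Ys]⟩

/-- `γ ∘ γ` is not reducible to the cover `{X, Y}`. -/
theorem gam_sq_not_reducible :
    ¬ IsReducible (G := ZMod 2) (· + ·) Xs Ys (gam ∘ gam) := by
  rintro ⟨α, β, h⟩
  set b : ZMod 2 → ZMod 2 → (↥(Xs ∪ Ys) → ZMod 2) :=
    fun x y z => if (z : ℕ) = 0 then x else if (z : ℕ) = 3 then y else 0 with hb
  have h1 : (1 : ℕ) ∈ Xs ∪ Ys := by simp [Xs, Ys]
  have h1X : (1 : ℕ) ∈ Xs := by simp [Xs]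
  have h1Y : (1 : ℕ) ∈ Ys := by simp [Ys]
  have hrX : ∀ x y y', restrict Xs Set.subset_union_left (b x y)
      = restrict Xs Set.subset_union_left (b x y') := by
    intro x y y'
    funext w
    have hw : (w : ℕ) ≠ 3 := by
      have hw2 := w.2
      simp only [Xs, Set.mem_insert_iff, Set.mem_singleton_iff] at hw2
      omega
    simp [restrict, hb, hw]
  have hrY : ∀ x x' y, restrict Ys Set.subset_union_right (b x y)
      = restrict Ys Set.subset_union_right (b x' y) := by
    intro x x' y
    funext w
    have hw : (w : ℕ) ≠ 0 := by
      have hw2 := w.2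
      simp only [Ys, Set.mem_insert_iff, Set.mem_singleton_iff] at hw2
      omega
    simp [restrict, hb, hw]
  have key : ∀ x y : ZMod 2,
      zmax x y = α (restrict Xs Set.subset_union_left (b x 0)) ⟨1, h1X⟩
        + β (restrict Ys Set.subset_union_right (b 0 y)) ⟨1, h1Y⟩ := by
    intro x y
    have hc := congrFun (congrFun h (b x y)) ⟨1, h1⟩
    simp only [Function.comp_apply, couple, dif_pos h1X, dif_pos h1Y] at hc
    rw [hrX x y 0, hrY x 0 y] at hc
    rw [← hc]
    simp [gam, hb]
  have e00 := key 0 0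
  have e01 := key 0 1
  have e10 := key 1 0
  have e11 := key 1 1
  have contra : zmax 0 0 + zmax 1 1 = zmax 0 1 + zmax 1 0 := by
    rw [e00, e11, e01, e10]; ring
  exact absurd contra (by decide)
end

section
/- Let G = ℤ/2ℤ with its additive group structure. There exist a finite set Z, subsets X, Y ⊆ Z with X ∪ Y = Z, and a transition function γ : (Z → G) → (Z → G) such that γ is reducible to the cover {X, Y} but γ ∘ γ is not reducible to {X, Y}. -/
open scoped Classical

/-
Take `X = {0, 1}`, `Y = {1, 2}` and let `α`, `β` swap the two values on `X`, resp. `Y`.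
Then `γ = α * β` sends `(g₀, g₁, g₂)` to `(g₁, g₀ + g₂, g₁)`, so `(γ ∘ γ) g` has `g₀ + g₂` at `0`.
But at a point of `X \ Y` a coupling `α' * β'` only sees `g↾X`, which forgets `g₂`.
-/

section Coupling

variable {U G : Type*} {op : G → G → G} {X Y Z : Set U}

theorem couple_apply_of_mem_of_notMem (hX : X ⊆ Z) (hY : Y ⊆ Z)
    (hZ : ∀ z ∈ Z, z ∈ X ∨ z ∈ Y) (α : (X → G) → (X → G)) (β : (Y → G) → (Y → G))
    (g : Z → G) (z : Z) (hzX : (z : U) ∈ X) (hzY : (z : U) ∉ Y) :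
    couple op hX hY hZ α β g z = α (restrict X hX g) ⟨z, hzX⟩ := by
  simp only [couple, dif_pos hzX, dif_neg hzY]

theorem IsReducible.apply_eq_of_restrict_eq {γ : (↥(X ∪ Y) → G) → (↥(X ∪ Y) → G)}
    (hγ : IsReducible op X Y γ) {g g' : ↥(X ∪ Y) → G}
    (hg : restrict X Set.subset_union_left g = restrict X Set.subset_union_left g')
    (z : ↥(X ∪ Y)) (hzX : (z : U) ∈ X) (hzY : (z : U) ∉ Y) : γ g z = γ g' z := by
  obtain ⟨α, β, rfl⟩ := hγ
  exact (couple_apply_of_mem_of_notMem _ _ _ α β g z hzX hzY).trans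
    ((congrArg (α · _) hg).trans (couple_apply_of_mem_of_notMem _ _ _ α β g' z hzX hzY).symm)

end Coupling

noncomputable def swapTransition {U G : Type*} {X : Set U} (a b : X) : (X → G) → (X → G) :=
  fun f => f ∘ Equiv.swap a b

def leftPair : Set ℕ := {0, 1}

def rightPair : Set ℕ := {1, 2}

noncomputable def swapCoupling :
    (↥(leftPair ∪ rightPair) → ZMod 2) → (↥(leftPair ∪ rightPair) → ZMod 2) :=
  couple (· + ·) Set.subset_union_left Set.subset_union_right (fun _ hz => hz)
    (swapTransition ⟨0, by simp [leftPair]⟩ ⟨1, by simp [leftPair]⟩)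
    (swapTransition ⟨1, by simp [rightPair]⟩ ⟨2, by simp [rightPair]⟩)

theorem swapCoupling_apply_zero (g : ↥(leftPair ∪ rightPair) → ZMod 2) :
    swapCoupling g ⟨0, by simp [leftPair]⟩ = g ⟨1, by simp [leftPair]⟩ := by
  have h0X : (0 : ℕ) ∈ leftPair := by simp [leftPair]
  have h0Y : (0 : ℕ) ∉ rightPair := by simp [rightPair]
  simp only [swapCoupling, couple, dif_pos h0X, dif_neg h0Y, swapTransition,
    Function.comp_apply, Equiv.swap_apply_left, restrict]

theorem swapCoupling_apply_one (g : ↥(leftPair ∪ rightPair) → ZMod 2) :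
    swapCoupling g ⟨1, by simp [leftPair]⟩ =
      g ⟨0, by simp [leftPair]⟩ + g ⟨2, by simp [rightPair]⟩ := by
  have h1X : (1 : ℕ) ∈ leftPair := by simp [leftPair]
  have h1Y : (1 : ℕ) ∈ rightPair := by simp [rightPair]
  simp only [swapCoupling, couple, dif_pos h1X, dif_pos h1Y, swapTransition,
    Function.comp_apply, Equiv.swap_apply_left, Equiv.swap_apply_right, restrict]

theorem swapCoupling_sq_apply_zero (g : ↥(leftPair ∪ rightPair) → ZMod 2) :
    swapCoupling (swapCoupling g) ⟨0, by simp [leftPair]⟩ =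
      g ⟨0, by simp [leftPair]⟩ + g ⟨2, by simp [rightPair]⟩ := by
  rw [swapCoupling_apply_zero, swapCoupling_apply_one]

/-- over `G = ℤ/2ℤ` there is a finite set `Z` covered by `{X, Y}`
and a transition function `γ` on `Z` which is reducible to `{X, Y}`, while
`γ ∘ γ` is not. -/
theorem exists_reducible_sq_not_reducible :
    ∃ (X Y : Set ℕ), (X ∪ Y).Finite ∧
      ∃ γ : (↥(X ∪ Y) → ZMod 2) → (↥(X ∪ Y) → ZMod 2),
        IsReducible (· + ·) X Y γ ∧ ¬ IsReducible (· + ·) X Y (γ ∘ γ) := by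
  refine ⟨leftPair, rightPair, by simp [leftPair, rightPair], swapCoupling, ⟨_, _, rfl⟩,
    fun hred => ?_⟩
  set e₂ : ↥(leftPair ∪ rightPair) → ZMod 2 := Pi.single ⟨2, by simp [rightPair]⟩ 1
  have hrestrict : restrict leftPair Set.subset_union_left e₂ =
      restrict leftPair Set.subset_union_left (0 : ↥(leftPair ∪ rightPair) → ZMod 2) := by
    funext ⟨x, hx⟩
    have hx2 : x ≠ 2 := by rintro rfl; simp [leftPair] at hx
    simp [e₂, restrict, Subtype.ext_iff, hx2]
  have h := hred.apply_eq_of_restrict_eq hrestrict ⟨0, by simp [leftPair]⟩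
    (by simp [leftPair]) (by simp [rightPair])
  simp only [Function.comp_apply, swapCoupling_sq_apply_zero] at h
  simp [e₂, Subtype.ext_iff] at h
end
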